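/- In the ring of formal power series in q over ℚ[x,y], let F = Σ_{n≥0} P_n(x,y) · q^n / n! (with P_0(x,y) = 1), where P_n(x,y) = Σ_{T ∈ 𝒫_n} x^{impr(T)} y^{prop(T)}. Then F^2 · (1 - 2(x+y)q) = 1; equivalently, Σ_{n≥0} P_n(x,y) q^n/n! = 1/√(1 - 2(x+y)q). -/

import Mathlib

/-- A plane tree with labeled vertices: a root label together with an ordered
list of child subtrees.  (A plane tree is a rooted tree in which the children
of each node are linearly ordered.) -/
inductive LTree : Type where
  | node : ℕ → List LTree → LTree

namespace LTree

/-- The label of the root. -/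
def rootLabel : LTree → ℕ
  | node a _ => a

/-- The list of child subtrees of the root. -/
def children : LTree → List LTree
  | node _ cs => cs

/-- `deg_T(root)`: the number of children of the root. -/
def rootDeg (t : LTree) : ℕ := (children t).length

mutual
  /-- The list of all vertex labels of a tree. -/
  def labels : LTree → List ℕ
    | node a cs => a :: labelsList cs
  /-- The list of all vertex labels of a forest. -/
  def labelsList : List LTree → List ℕ
    | [] => []
    | c :: rest => labels c ++ labelsList rest
end

/-- `β(v)`: the smallest label occurring in the subtree `t` rooted at `v`. -/
def minLabel (t : LTree) : ℕ := (labels t).foldr min (rootLabel t)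

/-- `min { j, β(c₁), …, β(cₖ) }` for a vertex `j` and a list of subtrees `c₁, …, cₖ`. -/
def minOver (j : ℕ) (rest : List LTree) : ℕ := (rest.map minLabel).foldr min j

mutual
  /-- The list of edges of a tree, each recorded as a (parent label, child label)
  pair, in depth-first order. -/
  def edgeList : LTree → List (ℕ × ℕ)
    | node a cs => edgeListAux a cs
  def edgeListAux : ℕ → List LTree → List (ℕ × ℕ)
    | _, [] => []
    | a, c :: rest => (a, rootLabel c) :: (edgeList c ++ edgeListAux a rest)
end

mutual
  /-- The list of improper edges of a tree: if a vertex `j` has children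
  `j₁, …, jₖ` (ordered left to right), the edge `(j, jᵢ)` is improper when
  `β(jᵢ) < min { j, β(j_{i+1}), …, β(jₖ) }`. -/
  def improperEdges : LTree → List (ℕ × ℕ)
    | node a cs => improperEdgesAux a cs
  def improperEdgesAux : ℕ → List LTree → List (ℕ × ℕ)
    | _, [] => []
    | j, c :: rest =>
        (if minLabel c < minOver j rest then [(j, rootLabel c)] else [])
          ++ improperEdges c ++ improperEdgesAux j rest
end

mutual
  /-- The list of proper (i.e. non-improper) edges of a tree. -/
  def properEdges : LTree → List (ℕ × ℕ)
    | node a cs => properEdgesAux a cs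
  def properEdgesAux : ℕ → List LTree → List (ℕ × ℕ)
    | _, [] => []
    | j, c :: rest =>
        (if minLabel c < minOver j rest then [] else [(j, rootLabel c)])
          ++ properEdges c ++ properEdgesAux j rest
end

/-- `impr T`: the number of improper edges of `T`. -/
def impr (t : LTree) : ℕ := (improperEdges t).length

/-- `prop T`: the number of proper edges of `T`. -/
def propCount (t : LTree) : ℕ := (properEdges t).length

/-- The number of edges of `T`. -/
def edgeCount (t : LTree) : ℕ := (edgeList t).length

/-- `T` is a labeled plane tree with `n` edges: its `n + 1` vertices are labeled
bijectively with `{1, 2, …, n + 1}`. -/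
def IsLPT (n : ℕ) (t : LTree) : Prop := (labels t).Perm (List.range' 1 (n + 1))

/-- `T` is increasing: vertex labels increase along every path from the root. -/
inductive Increasing : LTree → Prop where
  | node (a : ℕ) (cs : List LTree) :
      (∀ c ∈ cs, a < rootLabel c) → (∀ c ∈ cs, Increasing c) → Increasing (node a cs)

end LTree

open MvPolynomial

/-- `Pₙ(x,y) = Σ_{T ∈ 𝒫ₙ} x^{impr T} y^{prop T}`, the sum over all labeled plane
trees with `n` edges, as a polynomial in `ℚ[x,y]` (with `x = X 0`, `y = X 1`).
For `n = 0` the unique such tree is a single vertex, so `P₀(x,y) = 1`. -/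
noncomputable def Ppoly (n : ℕ) : MvPolynomial (Fin 2) ℚ :=
  ∑ᶠ T ∈ {T : LTree | LTree.IsLPT n T},
    (X 0 : MvPolynomial (Fin 2) ℚ) ^ LTree.impr T * (X 1) ^ LTree.propCount T

/-!
Cut a tree with at least two vertices into its leftmost root subtree `c` and the rest `r`
(`T = graft c r`). The new root edge is improper exactly when `c` carries the least label, so
summing over the label set `S` of `c` and pairing `S` with its complement gives, for
`a_N` the weighted count of trees on `N` labels,
`2 a_N = (x + y) ∑_k (N choose k) a_k a_{N-k}` for `N ≥ 2`, with `a_0 = 0` and `a_1 = 1`.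
For `G = ∑ a_N q^N / N!` this reads `2 G = (x + y) G² + 2 q`, hence
`(1 - (x + y) G)² = 1 - 2 (x + y) q`; differentiating gives `G' (1 - (x + y) G) = 1`,
and `G' = ∑ Pₙ qⁿ / n!` because `P_n = a_{n+1}`.
-/

theorem List.isLeast_foldr_min {α : Type*} [LinearOrder α] (x : α) (L : List α) :
    IsLeast {y | y ∈ x :: L} (L.foldr min x) := by
  induction L with
  | nil => simp [isLeast_singleton]
  | cons b L ih =>
    have hset : {y | y ∈ x :: b :: L} = {b} ∪ {y | y ∈ x :: L} := by
      ext y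
      simp only [List.mem_cons, Set.mem_union, Set.mem_singleton_iff, Set.mem_ofPred_eq]
      tauto
    rw [hset]
    exact isLeast_singleton.union ih

theorem Finset.sum_powerset_sdiff {α M : Type*} [DecidableEq α] [AddCommMonoid M]
    (U : Finset α) (f : Finset α → M) :
    ∑ S ∈ U.powerset, f (U \ S) = ∑ S ∈ U.powerset, f S := by
  refine Finset.sum_nbij' (U \ ·) (U \ ·) ?_ ?_ ?_ ?_ fun _ _ => rfl <;>
    simp +contextual

namespace LTree

def graft (c r : LTree) : LTree := node (rootLabel r) (c :: children r)

@[simp] theorem graft_node (c : LTree) (a : ℕ) (cs : List LTree) :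
    graft c (node a cs) = node a (c :: cs) := rfl

@[elab_as_elim]
theorem graft_induction {P : LTree → Prop} (leaf : ∀ a, P (node a []))
    (graft : ∀ c r, P c → P r → P (graft c r)) : ∀ t, P t
  | node a [] => leaf a
  | node a (c :: cs) =>
      graft c (node a cs) (graft_induction leaf graft c) (graft_induction leaf graft (node a cs))
termination_by t => sizeOf t

theorem coe_labels_graft (c r : LTree) :
    (labels (graft c r) : Multiset ℕ) = labels c + labels r := by
  obtain ⟨a, cs⟩ := r
  simp only [graft_node, labels, labelsList, Multiset.coe_add, Multiset.coe_eq_coe]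
  exact List.perm_middle.symm

theorem mem_labels_graft {c r : LTree} {x : ℕ} :
    x ∈ labels (graft c r) ↔ x ∈ labels c ∨ x ∈ labels r := by
  rw [← Multiset.mem_coe, coe_labels_graft, Multiset.mem_add, Multiset.mem_coe, Multiset.mem_coe]

theorem isLeast_minLabel (t : LTree) : IsLeast {x | x ∈ labels t} (minLabel t) := by
  obtain ⟨a, cs⟩ := t
  have h := List.isLeast_foldr_min a (labels (node a cs))
  simpa only [minLabel, rootLabel, labels, List.mem_cons, ← or_assoc, or_self] using h

theorem minLabel_mem (t : LTree) : minLabel t ∈ labels t := (isLeast_minLabel t).1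

theorem minLabel_graft (c r : LTree) : minLabel (graft c r) = min (minLabel c) (minLabel r) := by
  refine (isLeast_minLabel _).unique ?_
  convert (isLeast_minLabel c).union (isLeast_minLabel r) using 1
  ext y
  exact mem_labels_graft

theorem minOver_eq_minLabel (a : ℕ) (cs : List LTree) : minOver a cs = minLabel (node a cs) := by
  induction cs with
  | nil => exact (min_self a).symm
  | cons c cs ih => rw [← graft_node, minLabel_graft, ← ih]; rfl

theorem impr_graft (c r : LTree) :
    impr (graft c r) = (if minLabel c < minLabel r then 1 else 0) + impr c + impr r := by
  obtain ⟨a, cs⟩ := r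
  simp only [graft_node, impr, improperEdges, improperEdgesAux, minOver_eq_minLabel]
  split_ifs <;> simp only [List.length_append, List.length_singleton, List.length_nil]

theorem propCount_graft (c r : LTree) :
    propCount (graft c r) =
      (if minLabel c < minLabel r then 0 else 1) + propCount c + propCount r := by
  obtain ⟨a, cs⟩ := r
  simp only [graft_node, propCount, properEdges, properEdgesAux, minOver_eq_minLabel]
  split_ifs <;> simp only [List.length_append, List.length_singleton, List.length_nil]

theorem labels_ne_nil (t : LTree) : labels t ≠ [] := by
  obtain ⟨a, cs⟩ := t
  simp [labels]

theorem length_labels_graft (c r : LTree) :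
    (labels (graft c r)).length = (labels c).length + (labels r).length := by
  simpa using congrArg Multiset.card (coe_labels_graft c r)

theorem finite_setOf_length_labels_le (S : Set ℕ) (hS : S.Finite) (k : ℕ) :
    {t : LTree | (labels t).length ≤ k ∧ ∀ x ∈ labels t, x ∈ S}.Finite := by
  induction k with
  | zero =>
    refine Set.finite_empty.subset fun t ht => ?_
    exact labels_ne_nil t (List.eq_nil_of_length_eq_zero (Nat.le_zero.1 ht.1))
  | succ k ih =>
    refine ((hS.image fun a => node a []).union (ih.image2 graft ih)).subset ?_
    rintro ⟨a, _ | ⟨c, cs⟩⟩ ⟨hlen, hmem⟩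
    · exact .inl ⟨a, hmem a (by simp [labels]), rfl⟩
    · rw [← graft_node] at hlen hmem ⊢
      have := length_labels_graft c (node a cs)
      have := (labels c).length_pos_of_ne_nil (labels_ne_nil c)
      have := (labels (node a cs)).length_pos_of_ne_nil (labels_ne_nil _)
      exact .inr ⟨c, ⟨by omega, fun x hx => hmem x (mem_labels_graft.2 (.inl hx))⟩,
        node a cs, ⟨by omega, fun x hx => hmem x (mem_labels_graft.2 (.inr hx))⟩, rfl⟩

def treesOn (S : Finset ℕ) : Set LTree := {t | (labels t : Multiset ℕ) = S.val}

theorem mem_treesOn {S : Finset ℕ} {t : LTree} :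
    t ∈ treesOn S ↔ (labels t : Multiset ℕ) = S.val :=
  Iff.rfl

theorem mem_of_mem_treesOn {S : Finset ℕ} {t : LTree} (ht : t ∈ treesOn S) {x : ℕ} :
    x ∈ labels t ↔ x ∈ S := by
  rw [← Multiset.mem_coe, mem_treesOn.1 ht, Finset.mem_val]

theorem finite_treesOn (S : Finset ℕ) : (treesOn S).Finite := by
  refine (finite_setOf_length_labels_le S S.finite_toSet S.card).subset fun t ht => ⟨?_, ?_⟩
  · simpa using (congrArg Multiset.card (mem_treesOn.1 ht)).le
  · exact fun x hx => (mem_of_mem_treesOn ht).1 hx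

theorem treesOn_empty : treesOn ∅ = ∅ :=
  Set.eq_empty_of_forall_notMem fun t ht => labels_ne_nil t (by simpa [mem_treesOn] using ht)

theorem treesOn_singleton (a : ℕ) : treesOn {a} = {node a []} := by
  ext t
  refine ⟨fun ht => ?_, fun ht => by rw [Set.mem_singleton_iff.1 ht]; rfl⟩
  obtain ⟨b, _ | ⟨c, cs⟩⟩ := t
  · simpa [mem_treesOn, labels, labelsList] using ht
  · have hcard := congrArg Multiset.card (mem_treesOn.1 ht)
    rw [← graft_node, Multiset.coe_card, length_labels_graft] at hcard
    have := (labels c).length_pos_of_ne_nil (labels_ne_nil c)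
    have := (labels (node b cs)).length_pos_of_ne_nil (labels_ne_nil _)
    simp at hcard
    omega

theorem graft_inj {c r c' r' : LTree} : graft c r = graft c' r' ↔ c = c' ∧ r = r' := by
  obtain ⟨a, cs⟩ := r
  obtain ⟨a', cs'⟩ := r'
  simp only [graft_node, node.injEq, List.cons.injEq]
  tauto

theorem graft_mem_treesOn {U S : Finset ℕ} {c r : LTree} (hS : S ⊆ U) (hc : c ∈ treesOn S)
    (hr : r ∈ treesOn (U \ S)) : graft c r ∈ treesOn U := by
  rw [mem_treesOn, coe_labels_graft, mem_treesOn.1 hc, mem_treesOn.1 hr, Finset.sdiff_val,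
    add_tsub_cancel_of_le (Finset.val_le_iff.2 hS)]

theorem exists_subset_of_graft_mem_treesOn {U : Finset ℕ} {c r : LTree}
    (h : graft c r ∈ treesOn U) : ∃ S ⊆ U, c ∈ treesOn S ∧ r ∈ treesOn (U \ S) := by
  rw [mem_treesOn, coe_labels_graft] at h
  have hle : (labels c : Multiset ℕ) ≤ U.val := h ▸ Multiset.le_add_right _ _
  refine ⟨⟨labels c, Multiset.nodup_of_le hle U.nodup⟩, Finset.val_le_iff.1 hle, rfl, ?_⟩
  exact eq_tsub_of_add_eq ((add_comm _ _).trans h)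

theorem exists_graft_of_mem_treesOn {U : Finset ℕ} (hU : 2 ≤ U.card) {t : LTree}
    (ht : t ∈ treesOn U) : ∃ c r, t = graft c r := by
  obtain ⟨a, _ | ⟨c, cs⟩⟩ := t
  · have := congrArg Multiset.card (mem_treesOn.1 ht)
    simp [labels, labelsList] at this
    omega
  · exact ⟨c, node a cs, rfl⟩

theorem minLabel_lt_minLabel_iff {c r : LTree} (hd : ∀ a ∈ labels c, a ∉ labels r) :
    minLabel c < minLabel r ↔ minLabel (graft c r) ∈ labels c := by
  rw [minLabel_graft]
  refine ⟨fun h => by rw [min_eq_left h.le]; exact minLabel_mem c, fun h => ?_⟩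
  by_contra hle
  rw [min_eq_right (not_lt.1 hle)] at h
  exact hd _ h (minLabel_mem r)

theorem minLabel_of_mem_treesOn {U : Finset ℕ} {m : ℕ} (hm : IsLeast (U : Set ℕ) m)
    {t : LTree} (ht : t ∈ treesOn U) : minLabel t = m := by
  have hlabels : {a | a ∈ labels t} = (U : Set ℕ) := Set.ext fun _ => mem_of_mem_treesOn ht
  exact (isLeast_minLabel t).unique (hlabels ▸ hm)

def relabel (φ : ℕ → ℕ) : LTree → LTree
  | node a cs => node (φ a) (cs.map (relabel φ))

theorem relabel_graft (φ : ℕ → ℕ) (c r : LTree) :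
    relabel φ (graft c r) = graft (relabel φ c) (relabel φ r) := by
  obtain ⟨a, cs⟩ := r
  simp [relabel]

theorem relabel_leaf (φ : ℕ → ℕ) (a : ℕ) : relabel φ (node a []) = node (φ a) [] := by
  simp [relabel]

theorem coe_labels_relabel (φ : ℕ → ℕ) (t : LTree) :
    (labels (relabel φ t) : Multiset ℕ) = (labels t : Multiset ℕ).map φ := by
  induction t using graft_induction with
  | leaf a => simp [relabel_leaf, labels, labelsList]
  | graft c r hc hr =>
    rw [relabel_graft, coe_labels_graft, coe_labels_graft, hc, hr, Multiset.map_add]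

theorem mem_labels_relabel {φ : ℕ → ℕ} {t : LTree} {y : ℕ} :
    y ∈ labels (relabel φ t) ↔ ∃ x ∈ labels t, φ x = y := by
  rw [← Multiset.mem_coe, coe_labels_relabel, Multiset.mem_map]
  rfl

theorem relabel_relabel (φ ψ : ℕ → ℕ) (t : LTree) :
    relabel φ (relabel ψ t) = relabel (φ ∘ ψ) t := by
  induction t using graft_induction with
  | leaf a => simp [relabel_leaf]
  | graft c r hc hr => simp only [relabel_graft, hc, hr]

theorem relabel_eq_self {φ : ℕ → ℕ} {t : LTree} (h : ∀ x ∈ labels t, φ x = x) :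
    relabel φ t = t := by
  induction t using graft_induction with
  | leaf a => simp [relabel_leaf, h a (by simp [labels])]
  | graft c r hc hr =>
    rw [relabel_graft, hc fun x hx => h x (mem_labels_graft.2 (.inl hx)),
      hr fun x hx => h x (mem_labels_graft.2 (.inr hx))]

theorem minLabel_relabel {φ : ℕ → ℕ} {t : LTree}
    (hφ : StrictMonoOn φ {x | x ∈ labels t}) :
    minLabel (relabel φ t) = φ (minLabel t) := by
  refine (isLeast_minLabel _).unique ?_
  convert hφ.monotoneOn.map_isLeast (isLeast_minLabel t) using 1
  ext y
  exact mem_labels_relabel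

section TreeSum

variable {R : Type*} [CommSemiring R] (x y : R)

def weight (t : LTree) : R := x ^ impr t * y ^ propCount t

theorem weight_leaf (a : ℕ) : weight x y (node a []) = 1 := by
  simp [weight, impr, propCount, improperEdges, improperEdgesAux, properEdges, properEdgesAux]

theorem weight_graft (c r : LTree) :
    weight x y (graft c r) =
      (if minLabel c < minLabel r then x else y) * weight x y c * weight x y r := by
  simp only [weight, impr_graft, propCount_graft]
  split_ifs <;> ring

theorem weight_relabel {φ : ℕ → ℕ} {t : LTree} (hφ : StrictMonoOn φ {x | x ∈ labels t}) :
    weight x y (relabel φ t) = weight x y t := by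
  induction t using graft_induction with
  | leaf a => simp [relabel_leaf, weight_leaf]
  | graft c r hc hr =>
    have hφc : StrictMonoOn φ {x | x ∈ labels c} :=
      hφ.mono fun x hx => mem_labels_graft.2 (.inl hx)
    have hφr : StrictMonoOn φ {x | x ∈ labels r} :=
      hφ.mono fun x hx => mem_labels_graft.2 (.inr hx)
    have hlt : φ (minLabel c) < φ (minLabel r) ↔ minLabel c < minLabel r :=
      hφ.lt_iff_lt (mem_labels_graft.2 (.inl (minLabel_mem c)))
        (mem_labels_graft.2 (.inr (minLabel_mem r)))
    rw [relabel_graft, weight_graft, weight_graft, minLabel_relabel hφc, minLabel_relabel hφr,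
      hc hφc, hr hφr]
    simp only [hlt]

noncomputable def treeSum (S : Finset ℕ) : R := ∑ᶠ t ∈ treesOn S, weight x y t

theorem treeSum_empty : treeSum x y ∅ = 0 := by
  simp [treeSum, treesOn_empty]

theorem treeSum_singleton (a : ℕ) : treeSum x y {a} = 1 := by
  simp [treeSum, treesOn_singleton, weight_leaf]

theorem relabel_mem_treesOn {φ : ℕ → ℕ} {S : Finset ℕ} (hφ : Set.InjOn φ S) {t : LTree}
    (ht : t ∈ treesOn S) : relabel φ t ∈ treesOn (S.image φ) := by
  rw [mem_treesOn, coe_labels_relabel, mem_treesOn.1 ht, Finset.image_val_of_injOn hφ]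

theorem treeSum_image {φ : ℕ → ℕ} {S : Finset ℕ} (hφ : StrictMonoOn φ S) :
    treeSum x y (S.image φ) = treeSum x y S := by
  classical
  set ψ := Function.invFunOn φ S
  have hψφ : ∀ a ∈ S, ψ (φ a) = a := hφ.injOn.leftInvOn_invFunOn
  have hφψ : ∀ b ∈ S.image φ, φ (ψ b) = b := by
    intro b hb
    exact (Set.surjOn_image φ S).rightInvOn_invFunOn (by simpa using hb)
  have hψ : Set.InjOn ψ (S.image φ) := fun a ha b hb h => by
    rw [← hφψ a ha, ← hφψ b hb, h]
  have himage : (S.image φ).image ψ = S := by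
    rw [Finset.image_image]
    exact (Finset.image_congr hψφ).trans Finset.image_id
  have hinv : Set.InvOn (relabel ψ) (relabel φ) (treesOn S) (treesOn (S.image φ)) := by
    constructor
    · intro t ht
      rw [relabel_relabel]
      exact relabel_eq_self fun a ha => hψφ a ((mem_of_mem_treesOn ht).1 ha)
    · intro t ht
      rw [relabel_relabel]
      exact relabel_eq_self fun a ha => hφψ a ((mem_of_mem_treesOn ht).1 ha)
  have hbij : Set.BijOn (relabel φ) (treesOn S) (treesOn (S.image φ)) :=
    hinv.bijOn (fun t ht => relabel_mem_treesOn hφ.injOn ht)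
      fun t ht => himage ▸ relabel_mem_treesOn hψ ht
  refine (finsum_mem_eq_of_bijOn (relabel φ) hbij fun t ht => ?_).symm
  exact (weight_relabel x y (hφ.mono fun a ha => (mem_of_mem_treesOn ht).1 ha)).symm

theorem treeSum_eq_treeSum_range (S : Finset ℕ) :
    treeSum x y S = treeSum x y (Finset.range S.card) := by
  have hS : (Set.ofPred (· ∈ S)).Finite := S.finite_toSet
  have hcard : hS.toFinset.card = S.card := by congr 1; ext; simp
  have himage : (Finset.range S.card).image (Nat.nth (· ∈ S)) = S := by
    apply Finset.coe_injective
    rw [Finset.coe_image, Finset.coe_range, ← hcard, Nat.image_nth_Iio_card hS]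
    rfl
  have hmono : StrictMonoOn (Nat.nth (· ∈ S)) (Finset.range S.card) := by
    rw [Finset.coe_range, ← hcard]
    exact Nat.nth_strictMonoOn hS
  rw [← treeSum_image x y hmono, himage]

theorem weight_graft_of_mem_treesOn {U S : Finset ℕ} {m : ℕ} (hm : IsLeast (U : Set ℕ) m)
    (hS : S ⊆ U) {c r : LTree} (hc : c ∈ treesOn S) (hr : r ∈ treesOn (U \ S)) :
    weight x y (graft c r) = (if m ∈ S then x else y) * weight x y c * weight x y r := by
  have hd : ∀ a ∈ labels c, a ∉ labels r := fun a hac har =>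
    (Finset.mem_sdiff.1 ((mem_of_mem_treesOn hr).1 har)).2 ((mem_of_mem_treesOn hc).1 hac)
  simp only [weight_graft, minLabel_lt_minLabel_iff hd,
    minLabel_of_mem_treesOn hm (graft_mem_treesOn hS hc hr), mem_of_mem_treesOn hc]

theorem treeSum_eq_sum_powerset {U : Finset ℕ} (hU : 2 ≤ U.card) {m : ℕ}
    (hm : IsLeast (U : Set ℕ) m) :
    treeSum x y U =
      ∑ S ∈ U.powerset, (if m ∈ S then x else y) * treeSum x y S * treeSum x y (U \ S) := by
  have htoFinset : ∀ S, treeSum x y S = ∑ t ∈ (finite_treesOn S).toFinset, weight x y t :=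
    fun S => finsum_mem_eq_finite_toFinset_sum _ (finite_treesOn S)
  have hsplit : ∀ S : Finset ℕ,
      (if m ∈ S then x else y) * treeSum x y S * treeSum x y (U \ S) =
        ∑ p ∈ (finite_treesOn S).toFinset ×ˢ (finite_treesOn (U \ S)).toFinset,
          (if m ∈ S then x else y) * weight x y p.1 * weight x y p.2 := by
    intro S
    rw [Finset.sum_product, htoFinset, htoFinset, mul_assoc, Finset.sum_mul_sum, Finset.mul_sum]
    simp only [Finset.mul_sum, mul_assoc]
  rw [Finset.sum_congr rfl fun S _ => hsplit S, Finset.sum_sigma', htoFinset]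
  symm
  refine Finset.sum_bij (fun p _ => graft p.2.1 p.2.2) ?_ ?_ ?_ ?_
  · rintro ⟨S, c, r⟩ hp
    simp only [Finset.mem_sigma, Finset.mem_powerset, Finset.mem_product,
      Set.Finite.mem_toFinset] at hp ⊢
    exact graft_mem_treesOn hp.1 hp.2.1 hp.2.2
  · rintro ⟨S, c, r⟩ hp ⟨S', c', r'⟩ hp' h
    simp only [Finset.mem_sigma, Finset.mem_product, Set.Finite.mem_toFinset] at hp hp'
    obtain ⟨rfl, rfl⟩ := graft_inj.1 h
    rw [Finset.val_inj.1 ((mem_treesOn.1 hp.2.1).symm.trans (mem_treesOn.1 hp'.2.1))]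
  · intro t ht
    rw [Set.Finite.mem_toFinset] at ht
    obtain ⟨c, r, rfl⟩ := exists_graft_of_mem_treesOn hU ht
    obtain ⟨S, hS, hc, hr⟩ := exists_subset_of_graft_mem_treesOn ht
    refine ⟨⟨S, c, r⟩, ?_, rfl⟩
    simp only [Finset.mem_sigma, Finset.mem_powerset, Finset.mem_product, Set.Finite.mem_toFinset]
    exact ⟨hS, hc, hr⟩
  · rintro ⟨S, c, r⟩ hp
    simp only [Finset.mem_sigma, Finset.mem_powerset, Finset.mem_product,
      Set.Finite.mem_toFinset] at hp
    exact (weight_graft_of_mem_treesOn x y hm hp.1 hp.2.1 hp.2.2).symm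

theorem two_mul_treeSum {U : Finset ℕ} (hU : 2 ≤ U.card) :
    2 * treeSum x y U = (x + y) * ∑ S ∈ U.powerset, treeSum x y S * treeSum x y (U \ S) := by
  have hne : U.Nonempty := Finset.card_pos.1 (by omega)
  have hm := U.isLeast_min' hne
  set m := U.min' hne
  calc 2 * treeSum x y U
      = ∑ S ∈ U.powerset, (if m ∈ S then x else y) * treeSum x y S * treeSum x y (U \ S)
        + ∑ S ∈ U.powerset, (if m ∈ U \ S then x else y) * treeSum x y (U \ S)
            * treeSum x y (U \ (U \ S)) := by
        rw [two_mul, Finset.sum_powerset_sdiff U fun S =>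
          (if m ∈ S then x else y) * treeSum x y S * treeSum x y (U \ S),
          treeSum_eq_sum_powerset x y hU hm]
    _ = (x + y) * ∑ S ∈ U.powerset, treeSum x y S * treeSum x y (U \ S) := by
        rw [Finset.mul_sum, ← Finset.sum_add_distrib]
        refine Finset.sum_congr rfl fun S hS => ?_
        have hmU : m ∈ U := hm.1
        rw [Finset.sdiff_sdiff_eq_self (Finset.mem_powerset.1 hS)]
        by_cases hmS : m ∈ S <;> simp [hmS, hmU] <;> ring

theorem two_mul_treeSum_range {N : ℕ} (hN : 2 ≤ N) :
    2 * treeSum x y (Finset.range N) = (x + y) * ∑ k ∈ Finset.range (N + 1),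
      N.choose k • (treeSum x y (Finset.range k) * treeSum x y (Finset.range (N - k))) := by
  have hcard : ∀ S ∈ (Finset.range N).powerset,
      treeSum x y S * treeSum x y (Finset.range N \ S) =
        treeSum x y (Finset.range S.card) * treeSum x y (Finset.range (N - S.card)) := by
    intro S hS
    rw [treeSum_eq_treeSum_range x y S, treeSum_eq_treeSum_range x y (_ \ S),
      Finset.card_sdiff_of_subset (Finset.mem_powerset.1 hS), Finset.card_range]
  rw [two_mul_treeSum x y (by simpa using hN), Finset.sum_congr rfl hcard,
    Finset.sum_powerset_apply_card
      (fun k => treeSum x y (Finset.range k) * treeSum x y (Finset.range (N - k))),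
    Finset.card_range]

end TreeSum

end LTree

namespace PowerSeries

open Nat

variable {R : Type*} [CommRing R] [Algebra ℚ R]

noncomputable def egf (a : ℕ → R) : R⟦X⟧ := PowerSeries.mk fun n => (n ! : ℚ)⁻¹ • a n

theorem coeff_egf (a : ℕ → R) (n : ℕ) : coeff n (egf a) = (n ! : ℚ)⁻¹ • a n :=
  coeff_mk _ _

theorem coeff_egf_mul_egf (a b : ℕ → R) (N : ℕ) :
    coeff N (egf a * egf b) =
      (N ! : ℚ)⁻¹ • ∑ k ∈ Finset.range (N + 1), N.choose k • (a k * b (N - k)) := by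
  rw [coeff_mul, Finset.Nat.sum_antidiagonal_eq_sum_range_succ_mk, Finset.smul_sum]
  refine Finset.sum_congr rfl fun k hk => ?_
  have hkN : k ≤ N := Nat.lt_succ_iff.1 (Finset.mem_range.1 hk)
  rw [coeff_egf, coeff_egf, smul_mul_smul_comm, ← Nat.cast_smul_eq_nsmul ℚ, smul_smul]
  congr 1
  rw [← Nat.choose_mul_factorial_mul_factorial hkN]
  have := Nat.factorial_ne_zero k
  have := Nat.factorial_ne_zero (N - k)
  have := (Nat.choose_pos hkN).ne'
  push_cast
  field_simp

theorem derivative_egf (a : ℕ → R) : d⁄dX R (egf a) = egf fun n => a (n + 1) := by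
  ext n
  rw [coeff_derivative, coeff_egf, coeff_egf, mul_comm, ← Nat.cast_succ, ← nsmul_eq_mul,
    ← Nat.cast_smul_eq_nsmul ℚ, smul_smul, Nat.factorial_succ]
  congr 1
  have := Nat.factorial_ne_zero n
  push_cast
  field_simp

theorem two_mul_egf {u : R} {a : ℕ → R} (h0 : a 0 = 0) (h1 : a 1 = 1)
    (hrec : ∀ N, 2 ≤ N →
      2 * a N = u * ∑ k ∈ Finset.range (N + 1), N.choose k • (a k * a (N - k))) :
    2 * egf a = C u * egf a ^ 2 + 2 * X := by
  ext N
  rw [← map_ofNat C 2, map_add, coeff_C_mul, coeff_C_mul, coeff_C_mul, coeff_X, sq,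
    coeff_egf_mul_egf, coeff_egf]
  match N with
  | 0 => simp [h0]
  | 1 => simp [h0, h1, Finset.sum_range_succ]
  | N + 2 => rw [mul_smul_comm, hrec (N + 2) (by omega), mul_smul_comm]; simp

theorem sq_derivative_mul_eq_one {G : R⟦X⟧} {u : R} (hG : 2 * G = C u * G ^ 2 + 2 * X) :
    d⁄dX R G ^ 2 * (1 - 2 * C u * X) = 1 := by
  have hd := congrArg (d⁄dX R) hG
  have hd2 : d⁄dX R (2 : R⟦X⟧) = 0 := by exact_mod_cast (d⁄dX R).map_natCast 2
  simp only [map_add, Derivation.leibniz, Derivation.leibniz_pow, derivative_C, derivative_X, hd2,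
    smul_eq_mul] at hd
  have h2 : IsUnit (2 : R⟦X⟧) := by
    have := (isUnit_of_invertible (2 : ℚ)).map (algebraMap ℚ R⟦X⟧)
    rwa [map_ofNat] at this
  have hF : d⁄dX R G * (1 - C u * G) = 1 := by
    apply h2.mul_left_cancel
    linear_combination hd
  have hsq : (1 - C u * G) ^ 2 = 1 - 2 * C u * X := by
    linear_combination (-C u) * hG
  rw [← hsq, ← mul_pow, hF, one_pow]

end PowerSeries

theorem Ppoly_eq_treeSum (n : ℕ) :
    Ppoly n = LTree.treeSum (X 0) (X 1) (Finset.range (n + 1)) := by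
  have hset : {T | LTree.IsLPT n T} = LTree.treesOn (Finset.Icc 1 (n + 1)) := by
    ext T
    simp [LTree.IsLPT, LTree.mem_treesOn, Nat.Icc_eq_range']
  calc Ppoly n = LTree.treeSum (X 0) (X 1) (Finset.Icc 1 (n + 1)) := by
        rw [LTree.treeSum, ← hset]; rfl
    _ = LTree.treeSum (X 0) (X 1) (Finset.range (n + 1)) := by
        rw [LTree.treeSum_eq_treeSum_range, Nat.card_Icc, Nat.add_sub_cancel]

/-- In `ℚ[x,y][[q]]`, the generating function `F = Σ_{n≥0} Pₙ(x,y) qⁿ/n!` satisfies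
`F² · (1 - 2(x+y)q) = 1`; that is, `Σ_{n≥0} Pₙ(x,y) qⁿ/n! = 1/√(1 - 2(x+y)q)`. -/
theorem egf_Ppoly :
    (PowerSeries.mk fun n => MvPolynomial.C ((n.factorial : ℚ)⁻¹) * Ppoly n) ^ 2
      * (1 - 2 * PowerSeries.C (R := MvPolynomial (Fin 2) ℚ) (X 0 + X 1) * PowerSeries.X)
      = 1 := by
  set a : ℕ → MvPolynomial (Fin 2) ℚ := fun k => LTree.treeSum (X 0) (X 1) (Finset.range k)
  have hF : (PowerSeries.mk fun n => MvPolynomial.C ((n.factorial : ℚ)⁻¹) * Ppoly n) =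
      PowerSeries.derivative _ (PowerSeries.egf a) := by
    ext n
    rw [PowerSeries.derivative_egf, PowerSeries.coeff_mk, PowerSeries.coeff_egf,
      Ppoly_eq_treeSum, MvPolynomial.C_mul']
  have h1 : a 1 = 1 := by simp only [a, Finset.range_one, LTree.treeSum_singleton]
  rw [hF]
  exact PowerSeries.sq_derivative_mul_eq_one (PowerSeries.two_mul_egf (LTree.treeSum_empty _ _) h1
    fun N hN => LTree.two_mul_treeSum_range _ _ hN)
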